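/- arXiv:2405.16320 — 5 statements merged into one kernel-verified Lean document; each statement's English description precedes it below -/
import Mathlib

section
/- For ρ ∈ (0,2), ν ∈ [0,1], and X ∈ B(H), the identity (2−ρ)·Δ_{(2−ρ),ν}(X) = ρ·Δ_{ρ,ν}(X) holds, where Δ_{ρ,ν}(X) = w([[0, αX],[α(1−2ν)X*, β(X+(1−2ν)X*)]]) with α = √(8/ρ−4), β = 2/ρ−2 (and the corresponding α, β for parameter 2−ρ). -/
open scoped InnerProductSpace

/-- Numerical radius of a bounded operator on a complex Hilbert space. -/
noncomputable def numRad {H : Type*} [NormedAddCommGroup H] [InnerProductSpace ℂ H]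
    (T : H →L[ℂ] H) : ℝ :=
  ⨆ z : {z : H // ‖z‖ = 1}, ‖(⟪T z.1, z.1⟫_ℂ : ℂ)‖

/-- Crawford number. -/
noncomputable def crawford {H : Type*} [NormedAddCommGroup H] [InnerProductSpace ℂ H]
    (T : H →L[ℂ] H) : ℝ :=
  ⨅ z : {z : H // ‖z‖ = 1}, ‖(⟪T z.1, z.1⟫_ℂ : ℂ)‖

/-- The 2×2 block operator matrix `[[A, B], [C, D]]` acting on `H ⊕ H`
(the ℓ² direct sum `WithLp 2 (H × H)`), sending `(x, y)` to `(Ax + By, Cx + Dy)`. -/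
noncomputable def blk {H : Type*} [NormedAddCommGroup H] [InnerProductSpace ℂ H]
    (A B C D : H →L[ℂ] H) : WithLp 2 (H × H) →L[ℂ] WithLp 2 (H × H) :=
  (((WithLp.prodContinuousLinearEquiv 2 ℂ H H).symm.toContinuousLinearMap).comp
    (((A.comp (ContinuousLinearMap.fst ℂ H H) + B.comp (ContinuousLinearMap.snd ℂ H H)).prod
      (C.comp (ContinuousLinearMap.fst ℂ H H) + D.comp (ContinuousLinearMap.snd ℂ H H))))).comp
    ((WithLp.prodContinuousLinearEquiv 2 ℂ H H).toContinuousLinearMap)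

/-- The function `Δ_{(ρ,ν)}`: the numerical radius of the block operator
`[[0, αX], [α(1−2ν)X*, β(X+(1−2ν)X*)]]` with `α = √(8/ρ−4)`, `β = 2/ρ−2`. -/
noncomputable def Delta {H : Type*} [NormedAddCommGroup H] [InnerProductSpace ℂ H]
    [CompleteSpace H] (ρ ν : ℝ) (X : H →L[ℂ] H) : ℝ :=
  numRad (blk 0 (((Real.sqrt (8/ρ - 4) : ℝ) : ℂ) • X)
    (((Real.sqrt (8/ρ - 4) * (1 - 2*ν) : ℝ) : ℂ) • X.adjoint)
    (((2/ρ - 2 : ℝ) : ℂ) • (X + ((1 - 2*ν : ℝ) : ℂ) • X.adjoint)))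

section Aux
variable {H : Type*} [NormedAddCommGroup H] [InnerProductSpace ℂ H]

lemma numRad_real_smul (r : ℝ) (hr : 0 ≤ r) (T : H →L[ℂ] H) :
    r * numRad T = numRad ((r : ℂ) • T) := by
  unfold numRad
  rw [Real.mul_iSup_of_nonneg hr]
  congr 1; ext z
  show r * ‖(⟪T z.1, z.1⟫_ℂ : ℂ)‖ = ‖(⟪(r : ℂ) • T z.1, z.1⟫_ℂ : ℂ)‖
  rw [inner_smul_left]
  simp [abs_of_nonneg hr, Complex.conj_ofReal]

lemma smul_blk (c : ℂ) (A B C D : H →L[ℂ] H) :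
    c • blk A B C D = blk (c • A) (c • B) (c • C) (c • D) := by
  ext z
  apply (WithLp.equiv 2 (H × H)).injective
  simp [blk, smul_add, Prod.smul_mk]

lemma numRad_blk_neg (B C D : H →L[ℂ] H) :
    numRad (blk 0 B C (-D)) = numRad (blk 0 B C D) := by
  classical
  let j : WithLp 2 (H × H) → WithLp 2 (H × H) := fun z =>
    (WithLp.equiv 2 (H × H)).symm (((WithLp.equiv 2 (H × H)) z).1,
      -((WithLp.equiv 2 (H × H)) z).2)
  have hnorm : ∀ z, ‖j z‖ = ‖z‖ := by
    intro z
    simp [j, WithLp.prod_norm_eq_add]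
  have hinv : ∀ z, j (j z) = z := by intro z; simp [j]; rfl
  let φ : {z : WithLp 2 (H × H) // ‖z‖ = 1} ≃ {z : WithLp 2 (H × H) // ‖z‖ = 1} :=
    ⟨fun z => ⟨j z.1, by rw [hnorm]; exact z.2⟩,
     fun z => ⟨j z.1, by rw [hnorm]; exact z.2⟩,
     fun z => Subtype.ext (hinv z.1), fun z => Subtype.ext (hinv z.1)⟩
  unfold numRad
  rw [← Equiv.iSup_comp (g := fun z : {z : WithLp 2 (H × H) // ‖z‖ = 1} =>
    ‖(⟪blk 0 B C D z.1, z.1⟫_ℂ : ℂ)‖) φ]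
  congr 1; ext z
  have key : (⟪blk 0 B C D (j z.1), j z.1⟫_ℂ : ℂ) = -⟪blk 0 B C (-D) z.1, z.1⟫_ℂ := by
    simp [j, blk, WithLp.prod_inner_apply, inner_add_left, inner_neg_left, inner_neg_right]
    ring
  show ‖(⟪blk 0 B C (-D) z.1, z.1⟫_ℂ : ℂ)‖ = ‖(⟪blk 0 B C D (j z.1), j z.1⟫_ℂ : ℂ)‖
  rw [key, norm_neg]

lemma scaled_numRad (r a b c : ℝ) (hr : 0 ≤ r) (Y Z M : H →L[ℂ] H) :
    r * numRad (blk 0 ((a : ℂ) • Y) ((b : ℂ) • Z) ((c : ℂ) • M)) =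
      numRad (blk 0 (((r * a : ℝ) : ℂ) • Y) (((r * b : ℝ) : ℂ) • Z)
        (((r * c : ℝ) : ℂ) • M)) := by
  rw [numRad_real_smul r hr, smul_blk, smul_zero, smul_smul, smul_smul, smul_smul,
    ← Complex.ofReal_mul, ← Complex.ofReal_mul, ← Complex.ofReal_mul]

end Aux

theorem Delta_reflection_identity {H : Type*} [NormedAddCommGroup H] [InnerProductSpace ℂ H]
    [CompleteSpace H] {ρ ν : ℝ} (hρ : ρ ∈ Set.Ioo (0 : ℝ) 2) (hν : ν ∈ Set.Icc (0 : ℝ) 1)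
    (X : H →L[ℂ] H) :
    (2 - ρ) * Delta (2 - ρ) ν X = ρ * Delta ρ ν X := by
  obtain ⟨h0, h2⟩ := hρ
  have h2ρ : (0 : ℝ) < 2 - ρ := by linarith
  have sqrt_eq : ∀ s : ℝ, 0 < s → s * Real.sqrt (8/s - 4) = Real.sqrt (8*s - 4*s^2) := by
    intro s hs
    have h : 8*s - 4*s^2 = s^2 * (8/s - 4) := by field_simp
    rw [h, Real.sqrt_mul (sq_nonneg s), Real.sqrt_sq hs.le]
  have ha : (2 - ρ) * Real.sqrt (8/(2-ρ) - 4) = ρ * Real.sqrt (8/ρ - 4) := by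
    rw [sqrt_eq _ h2ρ, sqrt_eq _ h0]; ring_nf
  have ha2 : (2 - ρ) * (Real.sqrt (8/(2-ρ) - 4) * (1 - 2*ν)) =
      ρ * (Real.sqrt (8/ρ - 4) * (1 - 2*ν)) := by
    rw [← mul_assoc, ← mul_assoc, ha]
  have hb : (2 - ρ) * (2/(2-ρ) - 2) = -(ρ * (2/ρ - 2)) := by
    field_simp; ring
  unfold Delta
  rw [scaled_numRad (2-ρ) _ _ _ h2ρ.le, scaled_numRad ρ _ _ _ h0.le, ha, ha2, hb,
    Complex.ofReal_neg, neg_smul, numRad_blk_neg]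
end

section
/- For ν ∈ [0,1] and X ∈ B(H), Δ_{1,ν}(X) = (1 + |1−2ν|)·‖X‖, where Δ_{1,ν}(X) = w([[0, 2X],[2(1−2ν)X*, 0]]) is the numerical radius of the indicated block operator on H ⊕ H (since α = 2 and β = 0 when ρ = 1). -/
open scoped InnerProductSpace

/-! Write `c = 1 - 2ν` and `T` for the block operator. For `z = (x, y)` one has
`⟪T z, z⟫ = 2 (w + c w̄)` with `w = ⟪X y, x⟫`, so `|⟪T z, z⟫| ≤ 2 (1 + |c|) ‖X‖ ‖x‖ ‖y‖`, and
`2 ‖x‖ ‖y‖ ≤ ‖x‖² + ‖y‖² = 1`. Conversely, for a unit vector `v` take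
`z = (θ X v / ‖X v‖, v) / √2` with the phase `θ = 1` if `c ≥ 0` and `θ = i` if `c < 0`: then
`w + c w̄ = (θ + c θ̄) ‖X v‖` has modulus `(1 + |c|) ‖X v‖`. -/

open scoped ComplexConjugate

namespace Complex

theorem norm_add_ofReal_mul_conj_le (w : ℂ) (c : ℝ) :
    ‖w + c * conj w‖ ≤ (1 + |c|) * ‖w‖ := by
  calc ‖w + c * conj w‖ ≤ ‖w‖ + |c| * ‖w‖ := by
        simpa only [norm_mul, norm_real, Real.norm_eq_abs, RCLike.norm_conj]
          using norm_add_le w (c * conj w)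
    _ = (1 + |c|) * ‖w‖ := by ring

theorem exists_norm_eq_one_norm_add_ofReal_mul_conj (c : ℝ) :
    ∃ θ : ℂ, ‖θ‖ = 1 ∧ ‖θ + c * conj θ‖ = 1 + |c| := by
  rcases le_or_gt 0 c with hc | hc
  · refine ⟨1, norm_one, ?_⟩
    rw [map_one, mul_one, ← ofReal_one, ← ofReal_add, norm_real, Real.norm_eq_abs,
      abs_of_nonneg (by positivity), abs_of_nonneg hc]
  · refine ⟨I, norm_I, ?_⟩
    rw [conj_I, show I + c * -I = ((1 - c : ℝ) : ℂ) * I by push_cast; ring, norm_mul, norm_I,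
      mul_one, norm_real, Real.norm_eq_abs, abs_of_pos (by linarith), abs_of_neg hc]
    ring

end Complex

section NumRad

variable {E : Type*} [NormedAddCommGroup E] [InnerProductSpace ℂ E]

theorem norm_inner_apply_le_numRad (T : E →L[ℂ] E) {z : E} (hz : ‖z‖ = 1) :
    ‖⟪T z, z⟫_ℂ‖ ≤ numRad T := by
  refine le_ciSup (f := fun z : {z : E // ‖z‖ = 1} ↦ ‖⟪T z.1, z.1⟫_ℂ‖) ⟨‖T‖, ?_⟩ ⟨z, hz⟩
  rintro _ ⟨⟨y, hy⟩, rfl⟩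
  simpa [hy] using (norm_inner_le_norm (T y) y).trans
    (mul_le_mul_of_nonneg_right (T.le_opNorm y) (norm_nonneg y))

theorem numRad_le {T : E →L[ℂ] E} {r : ℝ} (hr : 0 ≤ r)
    (h : ∀ z : E, ‖z‖ = 1 → ‖⟪T z, z⟫_ℂ‖ ≤ r) : numRad T ≤ r :=
  Real.iSup_le (fun z ↦ h z.1 z.2) hr

theorem numRad_nonneg (T : E →L[ℂ] E) : 0 ≤ numRad T :=
  Real.iSup_nonneg fun _ ↦ norm_nonneg _

end NumRad

section OffDiagonal

variable {H : Type*} [NormedAddCommGroup H] [InnerProductSpace ℂ H] [CompleteSpace H]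

theorem inner_blk_offDiag_self (X : H →L[ℂ] H) (c : ℝ) (z : WithLp 2 (H × H)) :
    ⟪blk 0 ((2 : ℂ) • X) (((2 * c : ℝ) : ℂ) • X.adjoint) 0 z, z⟫_ℂ
      = 2 * (⟪X z.snd, z.fst⟫_ℂ + c * conj ⟪X z.snd, z.fst⟫_ℂ) := by
  simp [blk, WithLp.prod_inner_apply, ContinuousLinearMap.adjoint_inner_left, inner_smul_left,
    map_ofNat]
  ring

theorem norm_inner_blk_offDiag_self_le (X : H →L[ℂ] H) (c : ℝ) {z : WithLp 2 (H × H)}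
    (hz : ‖z‖ = 1) :
    ‖⟪blk 0 ((2 : ℂ) • X) (((2 * c : ℝ) : ℂ) • X.adjoint) 0 z, z⟫_ℂ‖ ≤ (1 + |c|) * ‖X‖ := by
  have hsq : ‖z.fst‖ ^ 2 + ‖z.snd‖ ^ 2 = 1 := by
    rw [← WithLp.prod_norm_sq_eq_of_L2, hz, one_pow]
  have hw : ‖⟪X z.snd, z.fst⟫_ℂ‖ ≤ ‖X‖ * ‖z.snd‖ * ‖z.fst‖ :=
    (norm_inner_le_norm _ _).trans
      (mul_le_mul_of_nonneg_right (X.le_opNorm _) (norm_nonneg _))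
  have hamgm : 2 * (‖z.snd‖ * ‖z.fst‖) ≤ 1 := by
    nlinarith [sq_nonneg (‖z.fst‖ - ‖z.snd‖)]
  rw [inner_blk_offDiag_self, norm_mul, RCLike.norm_ofNat]
  calc 2 * ‖⟪X z.snd, z.fst⟫_ℂ + c * conj ⟪X z.snd, z.fst⟫_ℂ‖
      ≤ 2 * ((1 + |c|) * (‖X‖ * ‖z.snd‖ * ‖z.fst‖)) := by
        gcongr
        exact (Complex.norm_add_ofReal_mul_conj_le _ c).trans (by gcongr)
    _ = (1 + |c|) * ‖X‖ * (2 * (‖z.snd‖ * ‖z.fst‖)) := by ring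
    _ ≤ (1 + |c|) * ‖X‖ := mul_le_of_le_one_right (by positivity) hamgm

theorem norm_inner_add_ofReal_mul_conj_le_numRad (X : H →L[ℂ] H) (c : ℝ) {u v : H}
    (hu : ‖u‖ = 1) (hv : ‖v‖ = 1) :
    ‖⟪X v, u⟫_ℂ + c * conj ⟪X v, u⟫_ℂ‖
      ≤ numRad (blk 0 ((2 : ℂ) • X) (((2 * c : ℝ) : ℂ) • X.adjoint) 0) := by
  set a : ℝ := (Real.sqrt 2)⁻¹
  have ha : a ^ 2 = 2⁻¹ := by rw [inv_pow, Real.sq_sqrt zero_le_two]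
  set z : WithLp 2 (H × H) := WithLp.toLp 2 ((a : ℂ) • u, (a : ℂ) • v)
  have hz1 : z.fst = (a : ℂ) • u := rfl
  have hz2 : z.snd = (a : ℂ) • v := rfl
  have hz : ‖z‖ = 1 := by
    have : ‖z‖ ^ 2 = 1 := by
      rw [WithLp.prod_norm_sq_eq_of_L2, hz1, hz2, norm_smul, norm_smul, hu, hv, Complex.norm_real,
        Real.norm_eq_abs, mul_one, sq_abs, ha]
      norm_num
    exact (pow_eq_one_iff_of_nonneg (norm_nonneg z) two_ne_zero).mp this
  have hinner : ⟪blk 0 ((2 : ℂ) • X) (((2 * c : ℝ) : ℂ) • X.adjoint) 0 z, z⟫_ℂ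
      = ⟪X v, u⟫_ℂ + c * conj ⟪X v, u⟫_ℂ := by
    have haC : (a : ℂ) ^ 2 = 2⁻¹ := by
      rw [← Complex.ofReal_pow, ha, Complex.ofReal_inv, Complex.ofReal_ofNat]
    rw [inner_blk_offDiag_self, hz1, hz2, map_smul, inner_smul_left, inner_smul_right,
      Complex.conj_ofReal, map_mul, map_mul, Complex.conj_ofReal]
    linear_combination (2 * (⟪X v, u⟫_ℂ + c * conj ⟪X v, u⟫_ℂ)) * haC
  rw [← hinner]
  exact norm_inner_apply_le_numRad _ hz

theorem mul_norm_apply_le_numRad_blk_offDiag (X : H →L[ℂ] H) (c : ℝ) {v : H} (hv : ‖v‖ = 1) :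
    (1 + |c|) * ‖X v‖ ≤ numRad (blk 0 ((2 : ℂ) • X) (((2 * c : ℝ) : ℂ) • X.adjoint) 0) := by
  rcases eq_or_ne (X v) 0 with hXv | hXv
  · rw [hXv, norm_zero, mul_zero]
    exact numRad_nonneg _
  obtain ⟨θ, hθ, hθc⟩ := Complex.exists_norm_eq_one_norm_add_ofReal_mul_conj c
  have hr : ‖X v‖ ≠ 0 := norm_ne_zero_iff.mpr hXv
  set u : H := (θ * (‖X v‖⁻¹ : ℝ)) • X v
  have hu : ‖u‖ = 1 := by
    simp only [u, norm_smul, norm_mul, hθ, Complex.norm_real, norm_inv, norm_norm, one_mul]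
    exact inv_mul_cancel₀ hr
  have hinner : ⟪X v, u⟫_ℂ = θ * ‖X v‖ := by
    have hrC : (‖X v‖ : ℂ) ≠ 0 := by exact_mod_cast hr
    simp only [u, inner_smul_right, inner_self_eq_norm_sq_to_K]
    push_cast
    field_simp
    norm_cast
  have hval : ⟪X v, u⟫_ℂ + c * conj ⟪X v, u⟫_ℂ = (θ + c * conj θ) * ‖X v‖ := by
    rw [hinner, map_mul, Complex.conj_ofReal]
    ring
  calc (1 + |c|) * ‖X v‖ = ‖⟪X v, u⟫_ℂ + c * conj ⟪X v, u⟫_ℂ‖ := by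
        rw [hval, norm_mul, hθc, Complex.norm_real, norm_norm]
    _ ≤ _ := norm_inner_add_ofReal_mul_conj_le_numRad X c hu hv

theorem numRad_blk_offDiag (X : H →L[ℂ] H) (c : ℝ) :
    numRad (blk 0 ((2 : ℂ) • X) (((2 * c : ℝ) : ℂ) • X.adjoint) 0) = (1 + |c|) * ‖X‖ := by
  have hc : 0 < 1 + |c| := by positivity
  refine le_antisymm
    (numRad_le (by positivity) fun z hz ↦ norm_inner_blk_offDiag_self_le X c hz) ?_
  rw [mul_comm, ← le_div_iff₀ hc]
  refine X.opNorm_le_of_unit_norm (div_nonneg (numRad_nonneg _) hc.le) fun v hv ↦ ?_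
  rw [le_div_iff₀ hc, mul_comm]
  exact mul_norm_apply_le_numRad_blk_offDiag X c hv

end OffDiagonal

theorem Delta_one_eq_general {H : Type*} [NormedAddCommGroup H] [InnerProductSpace ℂ H]
    [CompleteSpace H] {ν : ℝ} (X : H →L[ℂ] H) :
    numRad (blk 0 ((2 : ℂ) • X) (((2 * (1 - 2*ν) : ℝ) : ℂ) • X.adjoint) 0) =
      (1 + |1 - 2*ν|) * ‖X‖ :=
  numRad_blk_offDiag X (1 - 2 * ν)

theorem Delta_one_eq {H : Type*} [NormedAddCommGroup H] [InnerProductSpace ℂ H]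
    [CompleteSpace H] {ν : ℝ} (hν : ν ∈ Set.Icc (0 : ℝ) 1) (X : H →L[ℂ] H) :
    numRad (blk 0 ((2 : ℂ) • X) (((2 * (1 - 2*ν) : ℝ) : ℂ) • X.adjoint) 0) =
      (1 + |1 - 2*ν|) * ‖X‖ :=
  Delta_one_eq_general X
end

section
/- For any bounded operator X on a complex Hilbert space, w(X) ≤ (1/2)(‖X‖ + ‖X²‖^{1/2}). -/
open scoped InnerProductSpace

/-!
Fix a unit vector `z`. Buzano's inequality `2 |⟪x, e⟫ ⟪e, y⟫| ≤ ‖x‖ ‖y‖ + |⟪x, y⟫|` for a unit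
vector `e`, obtained by reflecting `y` in the line through `e`, is applied twice with `e = z`:
to `x = X† z`, `y = X z` it gives `2 |⟪X z, z⟫|² ≤ ‖X z‖ ‖X† z‖ + ‖X²‖`, and to `x = X† u`,
`y = X v` with `u`, `v` unit vectors aligned with `X z` and `X† z` it gives
`2 ‖X z‖ ‖X† z‖ ≤ ‖X‖² + ‖X²‖`. Hence `4 |⟪X z, z⟫|² ≤ ‖X‖² + 3 ‖X²‖ ≤ (‖X‖ + ‖X²‖^(1/2))²`,
the last step because `‖X²‖ ≤ ‖X‖²`.
-/

open scoped InnerProduct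

section

variable {𝕜 E : Type*} [RCLike 𝕜] [NormedAddCommGroup E] [InnerProductSpace 𝕜 E]

theorem two_mul_norm_inner_mul_inner_le {e : E} (he : ‖e‖ = 1) (x y : E) :
    2 * ‖⟪x, e⟫_𝕜 * ⟪e, y⟫_𝕜‖ ≤ ‖x‖ * ‖y‖ + ‖⟪x, y⟫_𝕜‖ := by
  have hreflect : ⟪x, (𝕜 ∙ e).reflection y⟫_𝕜 = 2 * (⟪x, e⟫_𝕜 * ⟪e, y⟫_𝕜) - ⟪x, y⟫_𝕜 := by
    rw [Submodule.reflection_apply, Submodule.starProjection_unit_singleton 𝕜 he,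
      inner_sub_right, inner_smul_right_eq_smul, inner_smul_right]
    simp only [nsmul_eq_mul, Nat.cast_ofNat]
    ring
  calc 2 * ‖⟪x, e⟫_𝕜 * ⟪e, y⟫_𝕜‖ = ‖⟪x, (𝕜 ∙ e).reflection y⟫_𝕜 + ⟪x, y⟫_𝕜‖ := by
        rw [hreflect, sub_add_cancel]
        simp only [norm_mul, RCLike.norm_ofNat]
    _ ≤ ‖⟪x, (𝕜 ∙ e).reflection y⟫_𝕜‖ + ‖⟪x, y⟫_𝕜‖ := norm_add_le _ _
    _ ≤ ‖x‖ * ‖y‖ + ‖⟪x, y⟫_𝕜‖ := by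
        gcongr
        simpa using norm_inner_le_norm (𝕜 := 𝕜) x ((𝕜 ∙ e).reflection y)

theorem exists_norm_le_one_inner_eq_norm (v : E) : ∃ w : E, ‖w‖ ≤ 1 ∧ ⟪w, v⟫_𝕜 = ‖v‖ := by
  rcases eq_or_ne v 0 with rfl | hv
  · exact ⟨0, by simp⟩
  · refine ⟨(‖v‖⁻¹ : 𝕜) • v, (norm_smul_inv_norm hv).le, ?_⟩
    rw [inner_smul_left, inner_self_eq_norm_sq_to_K]
    have : (‖v‖ : 𝕜) ≠ 0 := by simpa using hv
    simp only [map_inv₀, RCLike.conj_ofReal]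
    field_simp

theorem ContinuousLinearMap.norm_inner_apply_le_opNorm (S : E →L[𝕜] E) {w v : E} (hw : ‖w‖ ≤ 1)
    (hv : ‖v‖ ≤ 1) :
    ‖⟪w, S v⟫_𝕜‖ ≤ ‖S‖ :=
  calc ‖⟪w, S v⟫_𝕜‖ ≤ ‖w‖ * ‖S v‖ := norm_inner_le_norm w (S v)
    _ ≤ 1 * ‖S‖ := by gcongr; exact S.unit_le_opNorm v hv
    _ = ‖S‖ := one_mul _

end

namespace ContinuousLinearMap

variable {𝕜 E : Type*} [RCLike 𝕜] [NormedAddCommGroup E] [InnerProductSpace 𝕜 E] [CompleteSpace E]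
  (T : E →L[𝕜] E) {z : E}

theorem two_mul_norm_inner_apply_sq_le (hz : ‖z‖ = 1) :
    2 * ‖⟪T z, z⟫_𝕜‖ ^ 2 ≤ ‖T z‖ * ‖(T†) z‖ + ‖T * T‖ := by
  have h := two_mul_norm_inner_mul_inner_le (𝕜 := 𝕜) hz ((T†) z) (T z)
  rw [adjoint_inner_left, adjoint_inner_left, norm_mul, norm_inner_symm z, ← sq] at h
  have hTT : ‖⟪z, T (T z)⟫_𝕜‖ ≤ ‖T * T‖ := (T * T).norm_inner_apply_le_opNorm hz.le hz.le
  linarith [mul_comm ‖(T†) z‖ ‖T z‖]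

theorem two_mul_norm_apply_mul_norm_adjoint_apply_le (hz : ‖z‖ = 1) :
    2 * (‖T z‖ * ‖(T†) z‖) ≤ ‖T‖ ^ 2 + ‖T * T‖ := by
  obtain ⟨u, hu, hTz⟩ := exists_norm_le_one_inner_eq_norm (𝕜 := 𝕜) (T z)
  obtain ⟨v, hv, hT'z⟩ := exists_norm_le_one_inner_eq_norm (𝕜 := 𝕜) ((T†) z)
  have h := two_mul_norm_inner_mul_inner_le (𝕜 := 𝕜) hz ((T†) u) (T v)
  have hx : ⟪(T†) u, z⟫_𝕜 = ‖T z‖ := by rw [adjoint_inner_left, hTz]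
  have hy : ⟪z, T v⟫_𝕜 = ‖(T†) z‖ := by
    rw [← adjoint_inner_left, ← inner_conj_symm, hT'z, RCLike.conj_ofReal]
  rw [hx, hy, ← RCLike.ofReal_mul, RCLike.norm_of_nonneg (by positivity), adjoint_inner_left] at h
  have hu' : ‖(T†) u‖ ≤ ‖T‖ := by simpa using (T†).unit_le_opNorm u hu
  have hv' : ‖T v‖ ≤ ‖T‖ := T.unit_le_opNorm v hv
  have hTT : ‖⟪u, T (T v)⟫_𝕜‖ ≤ ‖T * T‖ := (T * T).norm_inner_apply_le_opNorm hu hv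
  nlinarith [mul_le_mul hu' hv' (norm_nonneg _) (norm_nonneg _)]

theorem four_mul_norm_inner_apply_sq_le (hz : ‖z‖ = 1) :
    4 * ‖⟪T z, z⟫_𝕜‖ ^ 2 ≤ ‖T‖ ^ 2 + 3 * ‖T * T‖ := by
  linarith [T.two_mul_norm_inner_apply_sq_le hz, T.two_mul_norm_apply_mul_norm_adjoint_apply_le hz]

end ContinuousLinearMap

theorem le_half_mul_add_sqrt {l a b : ℝ} (ha : 0 ≤ a) (hb : 0 ≤ b) (hba : b ≤ a * a)
    (h : 4 * l ^ 2 ≤ a ^ 2 + 3 * b) : l ≤ 1 / 2 * (a + √b) := by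
  have hs : √b ≤ a := Real.sqrt_le_iff.mpr ⟨ha, by nlinarith⟩
  have hs2 := Real.sq_sqrt hb
  nlinarith [Real.sqrt_nonneg b]

theorem numRad_le_half_norm_add_sqrt_norm_sq {H : Type*} [NormedAddCommGroup H]
    [InnerProductSpace ℂ H] [CompleteSpace H] (X : H →L[ℂ] H) :
    numRad X ≤ (1 / 2) * (‖X‖ + Real.sqrt ‖X * X‖) := by
  refine Real.iSup_le (fun z => ?_) (by positivity)
  exact le_half_mul_add_sqrt (norm_nonneg X) (norm_nonneg _) (norm_mul_le X X)
    (X.four_mul_norm_inner_apply_sq_le z.2)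
end

section
/- For any bounded operator X on a complex Hilbert space, the Aluthge transform satisfies ‖X̃‖ ≤ ‖X²‖^{1/2}, where X̃ = |X|^{1/2} V |X|^{1/2} with X = V|X| the polar decomposition. -/
set_option synthInstance.maxHeartbeats 1000000
set_option maxHeartbeats 1000000

open scoped InnerProductSpace

/-!
Write `R = |x|` and `P = R^{1/2}`. The Heinz inequality at `s = 1/2`, `‖P a P‖² ≤ ‖a‖ ‖R a R‖`,
follows from the C⋆-identity and `r(ab) = r(ba)` for the spectral radius. For `a = v` we have
`R v R = R x` and `‖R x‖ = ‖x x‖`, but `v` need not be a contraction, as it is only pinned down on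
the range of `R`. So the inequality is applied to the contractions
`a_ε = x (R + ε)⁻¹ = v R (R + ε)⁻¹` instead, for which still `‖R a_ε R‖ ≤ ‖x x‖`, and
`‖P v P - P a_ε P‖ ≤ ‖P‖ ‖v‖ √ε`.
-/

open scoped ENNReal

theorem spectrum.spectralRadius_mul_comm {𝕜 A : Type*} [NormedField 𝕜] [Ring A] [Algebra 𝕜 A]
    (a b : A) : spectralRadius 𝕜 (a * b) = spectralRadius 𝕜 (b * a) := by
  have key : ∀ c : A, spectralRadius 𝕜 c = ⨆ k ∈ spectrum 𝕜 c \ {0}, (‖k‖₊ : ℝ≥0∞) := by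
    intro c
    refine le_antisymm (iSup₂_le fun k hk => ?_) (iSup₂_mono' fun k hk => ⟨k, hk.1, le_rfl⟩)
    rcases eq_or_ne k 0 with rfl | hk0
    · simp
    · exact le_iSup₂ (f := fun k (_ : k ∈ spectrum 𝕜 c \ {0}) => (‖k‖₊ : ℝ≥0∞)) k ⟨hk, hk0⟩
  rw [key, key, spectrum.nonzero_mul_comm]

lemma Real.mul_sqrt_div_add_le_sqrt {t ε : ℝ} (ht : 0 ≤ t) (hε : 0 < ε) :
    ε * √t / (t + ε) ≤ √ε := by
  rw [div_le_iff₀ (by positivity)]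
  nlinarith [Real.sq_sqrt ht, Real.sq_sqrt hε.le, Real.sqrt_nonneg t, Real.sqrt_nonneg ε,
    mul_nonneg (Real.sqrt_nonneg ε) (sq_nonneg (√t - √ε))]

section CStarAlgebra

variable {A : Type*} [CStarAlgebra A] [PartialOrder A] [StarOrderedRing A]

lemma norm_sqrt_mul_mul_sqrt_sq_le {r : A} (hr : 0 ≤ r) (a : A) :
    ‖CFC.sqrt r * a * CFC.sqrt r‖ ^ 2 ≤ ‖a‖ * ‖r * a * r‖ := by
  nontriviality A
  set p := CFC.sqrt r
  have hp : IsSelfAdjoint p := .of_nonneg (CFC.sqrt_nonneg r)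
  have hpp : p * p = r := CFC.sqrt_mul_sqrt_self r hr
  set d := star a * r * a
  have hpdp : IsSelfAdjoint (p * d * p) := .of_nonneg <|
    conjugate_nonneg_of_nonneg (star_left_conjugate_nonneg hr a) (CFC.sqrt_nonneg r)
  calc ‖p * a * p‖ ^ 2 = ‖p * d * p‖ := by
        rw [sq, ← CStarRing.norm_star_mul_self]
        congr 1
        simp only [d, star_mul, hp.star_eq, ← hpp]
        noncomm_ring
    _ = (spectralRadius ℂ (d * r)).toReal := by
        rw [← hpdp.toReal_spectralRadius_complex_eq_norm, mul_assoc,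
          spectrum.spectralRadius_mul_comm, mul_assoc, hpp]
    _ ≤ ‖d * r‖ := by
        simpa using ENNReal.toReal_mono (by simp)
          (spectrum.spectralRadius_le_nnnorm (𝕜 := ℂ) (d * r))
    _ = ‖star a * (r * a * r)‖ := by simp only [d, mul_assoc]
    _ ≤ ‖a‖ * ‖r * a * r‖ := by simpa using norm_mul_le (star a) (r * a * r)

lemma CFC.norm_abs_mul (x y : A) : ‖CFC.abs x * y‖ = ‖x * y‖ := by
  have h : star (CFC.abs x * y) * (CFC.abs x * y) = star (x * y) * (x * y) := by
    simp only [star_mul, (IsSelfAdjoint.of_nonneg (CFC.abs_nonneg x)).star_eq]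
    rw [mul_assoc, ← mul_assoc (CFC.abs x), CFC.abs_mul_abs]
    noncomm_ring
  rw [← sq_eq_sq₀ (norm_nonneg _) (norm_nonneg _), sq, sq,
    ← CStarRing.norm_star_mul_self, h, CStarRing.norm_star_mul_self]

lemma continuousOn_inv_add_of_nonneg {r : A} (hr : 0 ≤ r) {ε : ℝ} (hε : 0 < ε) :
    ContinuousOn (fun t : ℝ => (t + ε)⁻¹) (spectrum ℝ r) :=
  ContinuousOn.inv₀ (by fun_prop) fun t ht => (add_pos_of_nonneg_of_pos
    (spectrum_nonneg_of_nonneg hr ht) hε).ne'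

lemma mul_cfc_inv_add {r : A} (hr : 0 ≤ r) {ε : ℝ} (hε : 0 < ε) :
    r * cfc (fun t : ℝ => (t + ε)⁻¹) r = cfc (fun t : ℝ => t / (t + ε)) r := by
  calc r * cfc (fun t : ℝ => (t + ε)⁻¹) r
      = cfc (fun t : ℝ => t) r * cfc (fun t : ℝ => (t + ε)⁻¹) r := by rw [cfc_id' ℝ r]
    _ = cfc (fun t : ℝ => t / (t + ε)) r :=
      (cfc_mul _ _ r (by fun_prop) (continuousOn_inv_add_of_nonneg hr hε)).symm

lemma norm_cfc_div_add_le_one {r : A} (hr : 0 ≤ r) {ε : ℝ} (hε : 0 ≤ ε) :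
    ‖cfc (fun t : ℝ => t / (t + ε)) r‖ ≤ 1 :=
  norm_cfc_le zero_le_one fun t ht => by
    have ht0 := spectrum_nonneg_of_nonneg hr ht
    rw [Real.norm_eq_abs, abs_of_nonneg (by positivity)]
    exact div_le_one_of_le₀ (by linarith) (by positivity)

lemma norm_sqrt_sub_cfc_div_add_mul_sqrt_le {r : A} (hr : 0 ≤ r) {ε : ℝ} (hε : 0 < ε) :
    ‖CFC.sqrt r - cfc (fun t : ℝ => t / (t + ε)) r * CFC.sqrt r‖ ≤ √ε := by
  have hcont : ContinuousOn (fun t : ℝ => t / (t + ε)) (spectrum ℝ r) :=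
    ContinuousOn.div (by fun_prop) (by fun_prop) fun t ht => (add_pos_of_nonneg_of_pos
      (spectrum_nonneg_of_nonneg hr ht) hε).ne'
  rw [CFC.sqrt_eq_real_sqrt r hr, cfcₙ_eq_cfc, ← cfc_mul _ _ r hcont, ← cfc_sub _ _ r]
  refine norm_cfc_le (Real.sqrt_nonneg ε) fun t ht => ?_
  have ht0 := spectrum_nonneg_of_nonneg hr ht
  have hpos : 0 < t + ε := by positivity
  have e : √t - t / (t + ε) * √t = ε * √t / (t + ε) := by field_simp; ring
  rw [Real.norm_eq_abs, e, abs_of_nonneg (by positivity)]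
  exact Real.mul_sqrt_div_add_le_sqrt ht0 hε

lemma norm_sqrt_abs_mul_mul_sqrt_abs_le_add {x v : A} (hx : x = v * CFC.abs x) {ε : ℝ}
    (hε : 0 < ε) :
    ‖CFC.sqrt (CFC.abs x) * v * CFC.sqrt (CFC.abs x)‖ ≤
      √‖x * x‖ + ‖CFC.sqrt (CFC.abs x)‖ * ‖v‖ * √ε := by
  set R := CFC.abs x
  set P := CFC.sqrt R
  have hR : 0 ≤ R := CFC.abs_nonneg x
  set h := cfc (fun t : ℝ => (t + ε)⁻¹) R
  set g := cfc (fun t : ℝ => t / (t + ε)) R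
  have hRh : R * h = g := mul_cfc_inv_add hR hε
  have hhR : h * R = g := by
    have hcomm := cfc_commute_cfc (fun t : ℝ => t) (fun t : ℝ => (t + ε)⁻¹) R
    rw [cfc_id' ℝ R hR.isSelfAdjoint] at hcomm
    rw [← hcomm.eq, hRh]
  have hg : ‖g‖ ≤ 1 := norm_cfc_div_add_le_one hR hε.le
  have hxh : ‖x * h‖ ≤ 1 := by rw [← CFC.norm_abs_mul, hRh]; exact hg
  have hRxhR : ‖R * (x * h) * R‖ ≤ ‖x * x‖ :=
    calc ‖R * (x * h) * R‖ = ‖R * x * g‖ := by rw [← hhR]; noncomm_ring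
      _ ≤ ‖R * x‖ * ‖g‖ := norm_mul_le _ _
      _ ≤ ‖x * x‖ := by rw [CFC.norm_abs_mul]; exact mul_le_of_le_one_right (norm_nonneg _) hg
  have hheinz : ‖P * (x * h) * P‖ ≤ √‖x * x‖ := Real.le_sqrt_of_sq_le <|
    (norm_sqrt_mul_mul_sqrt_sq_le hR (x * h)).trans <|
      (mul_le_of_le_one_left (norm_nonneg _) hxh).trans hRxhR
  have hdiff : P * v * P - P * (x * h) * P = P * v * (P - g * P) := by
    rw [show x * h = v * g by rw [hx, mul_assoc, hRh]]
    noncomm_ring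
  calc ‖P * v * P‖ = ‖P * (x * h) * P + P * v * (P - g * P)‖ := by rw [← hdiff, add_sub_cancel]
    _ ≤ ‖P * (x * h) * P‖ + ‖P‖ * ‖v‖ * ‖P - g * P‖ := by
        grw [norm_add_le, norm_mul_le (P * v), norm_mul_le P v]
    _ ≤ √‖x * x‖ + ‖P‖ * ‖v‖ * √ε := by
        grw [hheinz, norm_sqrt_sub_cfc_div_add_mul_sqrt_le hR hε]

open Filter Topology in
theorem norm_sqrt_abs_mul_mul_sqrt_abs_le {x v : A} (hx : x = v * CFC.abs x) :
    ‖CFC.sqrt (CFC.abs x) * v * CFC.sqrt (CFC.abs x)‖ ≤ √‖x * x‖ := by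
  have hlim : Tendsto (fun ε => √‖x * x‖ + ‖CFC.sqrt (CFC.abs x)‖ * ‖v‖ * √ε) (𝓝[>] 0)
      (𝓝 √‖x * x‖) := by
    refine tendsto_nhdsWithin_of_tendsto_nhds ?_
    have hcont : Continuous fun ε => √‖x * x‖ + ‖CFC.sqrt (CFC.abs x)‖ * ‖v‖ * √ε := by fun_prop
    simpa using hcont.tendsto 0
  exact ge_of_tendsto hlim (eventually_nhdsWithin_of_forall fun ε hε =>
    norm_sqrt_abs_mul_mul_sqrt_abs_le_add hx hε)

end CStarAlgebra

theorem norm_aluthge_le_sqrt_norm_sq_general {H : Type*} [NormedAddCommGroup H]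
    [InnerProductSpace ℂ H] [CompleteSpace H] (X V : H →L[ℂ] H)
    (hV : X = V * CFC.sqrt (star X * X)) :
    ‖CFC.sqrt (CFC.sqrt (star X * X)) * V * CFC.sqrt (CFC.sqrt (star X * X))‖ ≤
      Real.sqrt ‖X * X‖ :=
  norm_sqrt_abs_mul_mul_sqrt_abs_le hV

theorem norm_aluthge_le_sqrt_norm_sq {H : Type*} [NormedAddCommGroup H]
    [InnerProductSpace ℂ H] [CompleteSpace H] (X V : H →L[ℂ] H)
    (hV : X = V * CFC.sqrt (star X * X))
    (hV' : star V * X = CFC.sqrt (star X * X)) :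
    ‖CFC.sqrt (CFC.sqrt (star X * X)) * V * CFC.sqrt (CFC.sqrt (star X * X))‖ ≤
      Real.sqrt ‖X * X‖ :=
  norm_aluthge_le_sqrt_norm_sq_general X V hV
end

section
/- For vectors u, v, e in a complex Hilbert space with ‖e‖ = 1 and any nonzero complex λ, |⟨u,e⟩⟨e,v⟩| ≤ (1/|λ|)·(max{1, |λ−1|}·‖u‖‖v‖ + |⟨u,v⟩|). -/
open scoped InnerProductSpace

theorem buzano_extension {K : Type*} [NormedAddCommGroup K] [InnerProductSpace ℂ K]
    (u v e : K) (he : ‖e‖ = 1) (lam : ℂ) (hlam : lam ≠ 0) :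
    ‖(⟪u, e⟫_ℂ) * (⟪e, v⟫_ℂ)‖ ≤
      (1 / ‖lam‖) * (max 1 ‖lam - 1‖ * (‖u‖ * ‖v‖) + ‖(⟪u, v⟫_ℂ)‖) := by

  set c : ℂ := ⟪e, v⟫_ℂ with hc
  set M : ℝ := max 1 ‖lam - 1‖ with hM
  have hM1 : (1:ℝ) ≤ M := le_max_left _ _
  have hM2 : ‖lam - 1‖ ≤ M := le_max_right _ _
  have hee : ⟪e, e⟫_ℂ = 1 := by
    rw [inner_self_eq_norm_sq_to_K, he]; norm_num
  set w : K := v - lam • (c • e) with hw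
  -- orthogonality
  have horth : ⟪c • e, v - c • e⟫_ℂ = 0 := by
    rw [inner_sub_right, inner_smul_left, inner_smul_left, inner_smul_right, hee]
    simp [hc]
  have horth2 : ⟪(1 - lam) • (c • e), v - c • e⟫_ℂ = 0 := by
    rw [smul_smul, ← smul_smul, inner_smul_left, horth, mul_zero]
  have hdecomp : w = (1 - lam) • (c • e) + (v - c • e) := by
    rw [hw]; module
  have hvdecomp : v = c • e + (v - c • e) := by abel
  have hnw : ‖w‖ ^ 2 = ‖(1 - lam) • (c • e)‖ ^ 2 + ‖v - c • e‖ ^ 2 := by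
    rw [hdecomp]
    have := norm_add_sq_eq_norm_sq_add_norm_sq_of_inner_eq_zero _ _ horth2
    nlinarith [this]
  have hnv : ‖v‖ ^ 2 = ‖c • e‖ ^ 2 + ‖v - c • e‖ ^ 2 := by
    conv_lhs => rw [hvdecomp]
    have := norm_add_sq_eq_norm_sq_add_norm_sq_of_inner_eq_zero _ _ horth
    nlinarith [this]
  have hsmul : ‖(1 - lam) • (c • e)‖ = ‖lam - 1‖ * ‖c • e‖ := by
    rw [norm_smul, ← norm_neg (1 - lam)]; ring_nf
  have hwsq : ‖w‖ ^ 2 ≤ (M * ‖v‖) ^ 2 := by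
    have h1 : ‖c • e‖ ≥ 0 := norm_nonneg _
    have h2 : ‖v - c • e‖ ≥ 0 := norm_nonneg _
    have h3 : ‖lam - 1‖ ≥ 0 := norm_nonneg _
    have ha : (‖lam - 1‖ * ‖c • e‖) ^ 2 ≤ M ^ 2 * ‖c • e‖ ^ 2 := by
      have h4 := mul_le_mul_of_nonneg_right hM2 h1
      have h5 := mul_le_mul h4 h4 (by positivity) (by positivity)
      nlinarith [h5]
    have hb : ‖v - c • e‖ ^ 2 ≤ M ^ 2 * ‖v - c • e‖ ^ 2 := by
      have h6 : (1:ℝ) ≤ M ^ 2 := by nlinarith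
      nlinarith [mul_nonneg (sub_nonneg.mpr h6) (sq_nonneg ‖v - c • e‖)]
    have hexp : (M * ‖v‖) ^ 2 = M ^ 2 * ‖c • e‖ ^ 2 + M ^ 2 * ‖v - c • e‖ ^ 2 := by
      have : (M * ‖v‖) ^ 2 = M ^ 2 * ‖v‖ ^ 2 := by ring
      rw [this, hnv]; ring
    rw [hnw, hsmul, hexp]
    linarith
  have hwle : ‖w‖ ≤ M * ‖v‖ := by
    have hMv : 0 ≤ M * ‖v‖ := by positivity
    nlinarith [norm_nonneg w]
  -- key identity
  have hkey : lam * (⟪u, e⟫_ℂ * c) = ⟪u, v⟫_ℂ - ⟪u, w⟫_ℂ := by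
    rw [hw, inner_sub_right, inner_smul_right, inner_smul_right]
    ring
  have hmain : ‖lam‖ * ‖⟪u, e⟫_ℂ * c‖ ≤ M * (‖u‖ * ‖v‖) + ‖⟪u, v⟫_ℂ‖ := by
    rw [← norm_mul, hkey]
    calc ‖⟪u, v⟫_ℂ - ⟪u, w⟫_ℂ‖ ≤ ‖⟪u, v⟫_ℂ‖ + ‖⟪u, w⟫_ℂ‖ := norm_sub_le _ _
      _ ≤ ‖⟪u, v⟫_ℂ‖ + ‖u‖ * ‖w‖ := by
          gcongr; exact norm_inner_le_norm u w
      _ ≤ ‖⟪u, v⟫_ℂ‖ + ‖u‖ * (M * ‖v‖) := by gcongr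
      _ = M * (‖u‖ * ‖v‖) + ‖⟪u, v⟫_ℂ‖ := by ring
  have hlampos : 0 < ‖lam‖ := norm_pos_iff.mpr hlam
  rw [one_div, inv_mul_eq_div, le_div_iff₀ hlampos]
  linarith [hmain]
end
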